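/- arXiv:1810.09795 — 2 statements merged into one kernel-verified Lean document; each statement's English description precedes it below -/
import Mathlib

section
/- Let N and N' be tier-1 binary phylogenetic networks on the same leaf set that have a common embedded tree T. Then there is a finite sequence of valid head moves transforming N into N'. -/
noncomputable section

namespace Phylo

/-- In-degree of a vertex in a digraph given by an edge relation. -/
def indeg {V : Type} (E : V → V → Prop) (v : V) : ℕ := Nat.card {u // E u v}

/-- Out-degree of a vertex in a digraph given by an edge relation. -/
def outdeg {V : Type} (E : V → V → Prop) (v : V) : ℕ := Nat.card {w // E v w}

def IsRoot {V : Type} (E : V → V → Prop) (v : V) : Prop := indeg E v = 0 ∧ outdeg E v = 1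
def IsLeafNode {V : Type} (E : V → V → Prop) (v : V) : Prop := indeg E v = 1 ∧ outdeg E v = 0
def IsSplit {V : Type} (E : V → V → Prop) (v : V) : Prop := indeg E v = 1 ∧ outdeg E v = 2
def IsRetic {V : Type} (E : V → V → Prop) (v : V) : Prop := indeg E v = 2 ∧ outdeg E v = 1

/-- A directed graph is acyclic if no vertex lies on a directed cycle. -/
def Acyclic {V : Type} (E : V → V → Prop) : Prop := ∀ v, ¬ Relation.TransGen E v v

/-- `(V, E)` together with the leaf-labelling `lab : X → V` is a binary phylogenetic
network on leaf set `X`: an acyclic digraph with a unique root (indeg 0, outdeg 1),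
leaves (indeg 1, outdeg 0) bijectively labelled by `X`, and all other nodes split
nodes (indeg 1, outdeg 2) or reticulations (indeg 2, outdeg 1). -/
structure IsPhyloNet {V X : Type} [Fintype V] (E : V → V → Prop) (lab : X → V) : Prop where
  acyclic : Acyclic E
  root_unique : ∃! v, IsRoot E v
  lab_inj : Function.Injective lab
  leaf_iff : ∀ v, IsLeafNode E v ↔ v ∈ Set.range lab
  node_types : ∀ v, IsRoot E v ∨ IsLeafNode E v ∨ IsSplit E v ∨ IsRetic E v

/-- The reticulation number of a digraph. -/
def reticCount {V : Type} (E : V → V → Prop) : ℕ := Nat.card {v // IsRetic E v}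

/-- Labelled isomorphism of leaf-labelled digraphs. -/
def LabIso {V V' X : Type} (E : V → V → Prop) (lab : X → V)
    (E' : V' → V' → Prop) (lab' : X → V') : Prop :=
  ∃ φ : V ≃ V', (∀ a b, E a b ↔ E' (φ a) (φ b)) ∧ ∀ x, φ (lab x) = lab' x

/-- Result of the head move of the edge `(u,v)` to the edge `(s,t)`, where `p` is the
other parent of the reticulation `v` and `c` its child.  The former head `v` is reused
as the node `v'` subdividing `(s,t)`: we delete `(u,v), (p,v), (v,c), (s,t)`, add
`(p,c)` (suppressing `v`), `(s,v), (v,t)` (subdividing `(s,t)` by `v' = v`), and the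
new edge `(u,v') = (u,v)`. -/
def headMoveEdges {V : Type} (E : V → V → Prop) (u v p c s t : V) : V → V → Prop :=
  fun a b =>
    (E a b ∧ (a, b) ≠ (p, v) ∧ (a, b) ≠ (v, c) ∧ (a, b) ≠ (s, t) ∧ (a, b) ≠ (u, v))
      ∨ (a, b) = (p, c) ∨ (a, b) = (s, v) ∨ (a, b) = (v, t) ∨ (a, b) = (u, v)

/-- Result of the tail move of the edge `(u,v)` to the edge `(s,t)`, where `p` is the
parent of the split node `u` and `c` its other child; `u` is reused as the node `u'`
subdividing `(s,t)`. -/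
def tailMoveEdges {V : Type} (E : V → V → Prop) (u v p c s t : V) : V → V → Prop :=
  fun a b =>
    (E a b ∧ (a, b) ≠ (p, u) ∧ (a, b) ≠ (u, c) ∧ (a, b) ≠ (s, t) ∧ (a, b) ≠ (u, v))
      ∨ (a, b) = (p, c) ∨ (a, b) = (s, u) ∨ (a, b) = (u, t) ∨ (a, b) = (u, v)

/-- A leaf-labelled digraph on a finite vertex set, the carrier for phylogenetic
networks on leaf set `X`. -/
structure Net (X : Type) where
  V : Type
  fin : Fintype V
  E : V → V → Prop
  lab : X → V

attribute [instance] Net.fin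

/-- `N` is a binary phylogenetic network. -/
def Net.valid {X : Type} (N : Net X) : Prop := IsPhyloNet N.E N.lab

/-- Labelled isomorphism of two leaf-labelled digraphs. -/
def NetIso {X : Type} (N N' : Net X) : Prop := LabIso N.E N.lab N'.E N'.lab

/-- `N'` is obtained from `N` by one valid head move. -/
def HeadMoveStep {X : Type} (N N' : Net X) : Prop :=
  N.valid ∧ N'.valid ∧ ∃ u v p c s t : N.V,
    N.E u v ∧ N.E p v ∧ p ≠ u ∧ N.E v c ∧ N.E s t ∧
    LabIso (headMoveEdges N.E u v p c s t) N.lab N'.E N'.lab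

/-- `N'` is obtained from `N` by one valid tail move. -/
def TailMoveStep {X : Type} (N N' : Net X) : Prop :=
  N.valid ∧ N'.valid ∧ ∃ u v p c s t : N.V,
    N.E u v ∧ N.E p u ∧ N.E u c ∧ c ≠ v ∧ N.E s t ∧
    LabIso (tailMoveEdges N.E u v p c s t) N.lab N'.E N'.lab

/-- The digraph obtained by subdividing the edge `(s,t)` with a fresh node (`none`). -/
def subdivEdge {V : Type} (E : V → V → Prop) (s t : V) : Option V → Option V → Prop
  | some a, some b => E a b ∧ (a, b) ≠ (s, t)
  | some a, none => a = s
  | none, some b => b = t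
  | none, none => False

/-- `N'` is obtained from `N` by one valid distance-`d` head move: after subdividing
the target edge `(s,t)` with a new node `v'`, a shortest path from the old head `v`
to `v'` in the underlying undirected graph has length at most `d + 1`. -/
def HeadMoveStepD {X : Type} (d : ℕ) (N N' : Net X) : Prop :=
  N.valid ∧ N'.valid ∧ ∃ u v p c s t : N.V,
    N.E u v ∧ N.E p v ∧ p ≠ u ∧ N.E v c ∧ N.E s t ∧
    (SimpleGraph.fromRel (subdivEdge N.E s t)).dist (some v) none ≤ d + 1 ∧
    LabIso (headMoveEdges N.E u v p c s t) N.lab N'.E N'.lab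

/-- `N` and `N'` are connected by a finite sequence of `R`-moves (up to labelled
isomorphism, i.e. renaming of vertices). -/
def ConnectedBy {X : Type} (R : Net X → Net X → Prop) (N N' : Net X) : Prop :=
  Relation.ReflTransGen (fun A B => R A B ∨ NetIso A B) N N'

/-- `N'` can be reached from `N` by at most `n` `R`-moves (up to labelled isomorphism). -/
def stepsLE {X : Type} (R : Net X → Net X → Prop) : ℕ → Net X → Net X → Prop
  | 0, N, N' => NetIso N N'
  | n + 1, N, N' => stepsLE R n N N' ∨ ∃ M, R N M ∧ stepsLE R n M N'

/-- `(V, E)` is a subdivision of `(W, F)` via the injection `φ`: every vertex outside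
the image of `φ` is a redundant (indeg 1, outdeg 1) node, and `F a b` holds iff there
is an `E`-path from `φ a` to `φ b` all of whose internal vertices avoid the image. -/
def IsSubdivision {W V : Type} (F : W → W → Prop) (E : V → V → Prop) (φ : W → V) : Prop :=
  Function.Injective φ ∧
  (∀ v, v ∉ Set.range φ → indeg E v = 1 ∧ outdeg E v = 1) ∧
  (∀ a b, F a b ↔ ∃ l : List V,
      List.Chain E (φ a) (l ++ [φ b]) ∧ ∀ x ∈ l, x ∉ Set.range φ)

/-- A rooted phylogenetic tree on `X`: a phylogenetic network with no reticulations. -/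
def IsTree {X : Type} (T : Net X) : Prop := T.valid ∧ reticCount T.E = 0

/-- The tree `T` is embedded in `N`: some `X`-labelled subgraph of `N` is a
subdivision of `T`. -/
def EmbeddedTree {X : Type} (T N : Net X) : Prop :=
  IsTree T ∧ ∃ (E' : N.V → N.V → Prop) (φ : T.V → N.V),
    (∀ a b, E' a b → N.E a b) ∧ IsSubdivision T.E E' φ ∧ ∀ x, φ (T.lab x) = N.lab x

/-- The digraph contains a triangle `t, s, r` with edges `(t,s), (t,r), (s,r)`. -/
def HasTriangle {V : Type} (E : V → V → Prop) : Prop :=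
  ∃ t s r, E t s ∧ E t r ∧ E s r

/-- The network has `k` reticulations at the top, with nodes `c` (child of the root),
`a i`, `b i` for `1 ≤ i ≤ k`. -/
def ReticsAtTop {V : Type} (E : V → V → Prop) (k : ℕ) (c : V) (a b : ℕ → V) : Prop :=
  (∃ ρ, IsRoot E ρ ∧ E ρ c) ∧ E c (a 1) ∧ E c (b 1) ∧
  (∀ i, 1 ≤ i → i ≤ k → E (a i) (b i) ∧ IsSplit E (a i) ∧ IsRetic E (b i)) ∧
  (∀ i, 1 ≤ i → i < k →
    ((E (a i) (a (i + 1)) ∧ E (b i) (b (i + 1))) ∨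
     (E (a i) (b (i + 1)) ∧ E (b i) (a (i + 1)))))

/-- The network has `k` reticulations neatly at the top. -/
def NeatlyAtTop {V : Type} (E : V → V → Prop) (k : ℕ) (c : V) (a b : ℕ → V) : Prop :=
  (∃ ρ, IsRoot E ρ ∧ E ρ c) ∧ E c (a 1) ∧ E c (b 1) ∧
  (∀ i, 1 ≤ i → i ≤ k → E (a i) (b i) ∧ IsSplit E (a i) ∧ IsRetic E (b i)) ∧
  (∀ i, 1 ≤ i → i < k → E (a i) (a (i + 1)) ∧ E (b i) (b (i + 1)))

/-!
A tier-1 network `N` displaying `T` is `T` with one arc added, from a new vertex subdividing an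
arc `(a, b)` to a new vertex subdividing an arc `(s, t)`: the embedded copy of `T` contains every
arc of `N` except one of the two arcs entering the reticulation, by a degree count. Moving the head
of the added arc to any other admissible arc is one head move. If `a` has parent `p` and other
child `d`, then moving the head to `(a, d)` creates a triangle, which is also the network with the
arc added from `(p, a)` to `(a, d)`; so the tail climbs to the root arc, where any two networks
differ by one head move.
-/

open Relation Sum

section Degrees

variable {V : Type} {E F : V → V → Prop} {u v w z : V}

lemma outdeg_eq_ncard (E : V → V → Prop) (v : V) : outdeg E v = {w | E v w}.ncard :=
  Nat.card_coe_set_eq _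

lemma indeg_eq_ncard (E : V → V → Prop) (v : V) : indeg E v = {u | E u v}.ncard :=
  Nat.card_coe_set_eq _

lemma outdeg_mono [Finite V] (h : ∀ a b, E a b → F a b) (v : V) :
    outdeg E v ≤ outdeg F v := by
  rw [outdeg_eq_ncard, outdeg_eq_ncard]
  exact Set.ncard_le_ncard fun w => h v w

lemma indeg_mono [Finite V] (h : ∀ a b, E a b → F a b) (v : V) : indeg E v ≤ indeg F v :=
  outdeg_mono (E := flip E) (F := flip F) (fun a b => h b a) v

lemma outdeg_pos [Finite V] (h : E v w) : 0 < outdeg E v := by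
  rw [outdeg_eq_ncard]
  exact (Set.ncard_pos).2 ⟨w, h⟩

lemma indeg_pos [Finite V] (h : E u v) : 0 < indeg E v :=
  outdeg_pos (E := flip E) h

lemma exists_of_outdeg_ne_zero (h : outdeg E v ≠ 0) : ∃ w, E v w := by
  rw [outdeg_eq_ncard] at h
  exact Set.nonempty_of_ncard_ne_zero h

lemma exists_of_indeg_ne_zero (h : indeg E v ≠ 0) : ∃ u, E u v :=
  exists_of_outdeg_ne_zero (E := flip E) h

lemma eq_of_outdeg_le_one [Finite V] (h : outdeg E v ≤ 1) (hw : E v w) (hz : E v z) : w = z := by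
  rw [outdeg_eq_ncard, Set.ncard_le_one] at h
  exact h w hw z hz

lemma eq_of_indeg_le_one [Finite V] (h : indeg E v ≤ 1) (hu : E u v) (hz : E z v) : u = z :=
  eq_of_outdeg_le_one (E := flip E) h hu hz

lemma eq_or_eq_of_outdeg_le_two [Finite V] (h : outdeg E v ≤ 2) (hw : E v w) (hz : E v z)
    (hwz : w ≠ z) {c : V} (hc : E v c) : c = w ∨ c = z := by
  rw [outdeg_eq_ncard] at h
  have hs : {w, z} = {c | E v c} := Set.eq_of_subset_of_ncard_le
    (Set.insert_subset hw (Set.singleton_subset_iff.2 hz)) (h.trans (Set.ncard_pair hwz).ge)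
  simpa using (Set.ext_iff.1 hs c).2 hc

lemma eq_or_eq_of_indeg_le_two [Finite V] (h : indeg E v ≤ 2) (hu : E u v) (hz : E z v)
    (huz : u ≠ z) {c : V} (hc : E c v) : c = u ∨ c = z :=
  eq_or_eq_of_outdeg_le_two (E := flip E) h hu hz huz hc

lemma exists_ne_of_outdeg_eq_two (h : outdeg E v = 2) (w : V) : ∃ z, E v z ∧ z ≠ w := by
  rw [outdeg_eq_ncard, Set.ncard_eq_two] at h
  obtain ⟨p, q, hpq, hs⟩ := h
  have hp : p ∈ {w | E v w} := by simp [hs]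
  have hq : q ∈ {w | E v w} := by simp [hs]
  by_cases hpw : p = w
  · exact ⟨q, hq, fun h => hpq (hpw.trans h.symm)⟩
  · exact ⟨p, hp, hpw⟩

lemma exists_not_of_indeg_lt [Finite V] (h : indeg E v < indeg F v) :
    ∃ u, F u v ∧ ¬ E u v := by
  rw [indeg_eq_ncard, indeg_eq_ncard] at h
  exact Set.exists_mem_notMem_of_ncard_lt_ncard h

lemma exists_not_of_outdeg_lt [Finite V] (h : outdeg E v < outdeg F v) :
    ∃ w, F v w ∧ ¬ E v w :=
  exists_not_of_indeg_lt (E := flip E) (F := flip F) h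

lemma rel_of_indeg_le [Finite V] (h : ∀ a b, E a b → F a b) (hd : indeg F v ≤ indeg E v)
    (hu : F u v) : E u v := by
  rw [indeg_eq_ncard, indeg_eq_ncard] at hd
  have hs := Set.eq_of_subset_of_ncard_le (fun c => h c v) hd
  exact (Set.ext_iff.1 hs u).2 hu

lemma rel_of_outdeg_le [Finite V] (h : ∀ a b, E a b → F a b) (hd : outdeg F v ≤ outdeg E v)
    (hw : F v w) : E v w :=
  rel_of_indeg_le (E := flip E) (F := flip F) (fun a b => h b a) hd hw

lemma exists_isRetic_iff_of_reticCount_eq_one (h : reticCount E = 1) :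
    ∃ y, ∀ v, IsRetic E v ↔ v = y := by
  obtain ⟨⟨y, hy⟩, hu⟩ := Nat.card_eq_one_iff_exists.1 h
  exact ⟨y, fun v => ⟨fun hv => congrArg Subtype.val (hu ⟨v, hv⟩), fun e => e ▸ hy⟩⟩

end Degrees

section Acyclic

variable {V : Type} {E : V → V → Prop} {u v x y : V}

lemma Acyclic.ne (h : Acyclic E) (e : E u v) : u ≠ v :=
  fun huv => h u (TransGen.single (huv ▸ e))

lemma Acyclic.wellFounded [Finite V] (h : Acyclic E) : WellFounded E :=
  have : IsTrans V (TransGen E) := ⟨fun _ _ _ => TransGen.trans⟩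
  have : Std.Irrefl (TransGen E) := ⟨h⟩
  Subrelation.wf TransGen.single (Finite.wellFounded_of_trans_of_irrefl (TransGen E))

lemma acyclic_of_lt (f : V → ℕ) (hf : ∀ v w, E v w → f v < f w) : Acyclic E :=
  fun v hv => by simpa [transGen_eq_self] using TransGen.lift f hf v v hv

lemma Acyclic.exists_height [Finite V] (h : Acyclic E) :
    ∃ f : V → ℕ, ∀ v w, E v w → f v < f w :=
  ⟨fun v => {u | TransGen E u v}.ncard, fun v _ e =>
    Set.ncard_lt_ncard ⟨fun _ hu => hu.tail e, fun hsub => h v (hsub (TransGen.single e))⟩⟩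

lemma Acyclic.sup_arc (h : Acyclic E) (hyx : ¬ ReflTransGen E y x) :
    Acyclic (fun v w => E v w ∨ v = x ∧ w = y) := by
  have key : ∀ a b, TransGen (fun v w => E v w ∨ v = x ∧ w = y) a b →
      TransGen E a b ∨ ReflTransGen E a x ∧ ReflTransGen E y b := by
    intro a b hab
    induction hab with
    | single e =>
      rcases e with e | ⟨rfl, rfl⟩
      · exact Or.inl (TransGen.single e)
      · exact Or.inr ⟨ReflTransGen.refl, ReflTransGen.refl⟩
    | tail _ e ih =>
      rcases e with e | ⟨rfl, rfl⟩
      · exact ih.imp (·.tail e) fun ⟨hax, hyb⟩ => ⟨hax, hyb.tail e⟩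
      · rcases ih with ih | ⟨-, hyx'⟩
        · exact Or.inr ⟨ih.to_reflTransGen, ReflTransGen.refl⟩
        · exact absurd hyx' hyx
  intro v hv
  rcases key v v hv with hv | ⟨hvx, hyv⟩
  · exact h v hv
  · exact hyx (hyv.trans hvx)

end Acyclic

section Networks

variable {V X : Type} [Fintype V] {E : V → V → Prop} {lab : X → V} {v : V}

lemma IsPhyloNet.outdeg_le_two (hN : IsPhyloNet E lab) (v : V) : outdeg E v ≤ 2 := by
  rcases hN.node_types v with h | h | h | h <;> · have := h.2; omega

lemma IsPhyloNet.indeg_le_one (hN : IsPhyloNet E lab) (hv : ¬ IsRetic E v) : indeg E v ≤ 1 := by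
  rcases hN.node_types v with h | h | h | h
  all_goals first | exact absurd h hv | · have := h.1; omega

lemma IsTree.not_isRetic {T : Net X} (hT : IsTree T) (v : T.V) : ¬ IsRetic T.E v := fun hv =>
  have : Nonempty {v // IsRetic T.E v} := ⟨⟨v, hv⟩⟩
  Finite.card_pos.ne' hT.2

lemma IsTree.node_types {T : Net X} (hT : IsTree T) (v : T.V) :
    IsRoot T.E v ∨ IsLeafNode T.E v ∨ IsSplit T.E v := by
  rcases hT.1.node_types v with h | h | h | h
  exacts [Or.inl h, Or.inr (Or.inl h), Or.inr (Or.inr h), absurd h (hT.not_isRetic v)]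

lemma IsTree.exists_parent {T : Net X} (hT : IsTree T) {v : T.V} (hv : ¬ IsRoot T.E v) :
    ∃ p, T.E p v := by
  apply exists_of_indeg_ne_zero
  rcases hT.node_types v with h | h | h
  exacts [absurd h hv, by rw [h.1]; norm_num, by rw [h.1]; norm_num]

end Networks

section AddArc

variable {X : Type} {T : Net X} {a b s t : T.V}

/-- `T` with the arc `(a, b)` subdivided by `inr false`, the arc `(s, t)` subdivided by
`inr true`, and the new arc `inr false → inr true`. -/
def addArcE (T : Net X) (a b s t : T.V) : T.V ⊕ Bool → T.V ⊕ Bool → Prop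
  | inl p, inl q => T.E p q ∧ (p, q) ≠ (a, b) ∧ (p, q) ≠ (s, t)
  | inl p, inr false => p = a
  | inl p, inr true => p = s
  | inr false, inl q => q = b
  | inr true, inl q => q = t
  | inr false, inr true => True
  | _, _ => False

def addArc (T : Net X) (a b s t : T.V) : Net X :=
  ⟨T.V ⊕ Bool, inferInstance, addArcE T a b s t, fun z => inl (T.lab z)⟩

/-- The last condition says that the new arc closes no cycle. -/
def IsAdmissibleArc (T : Net X) (a b s t : T.V) : Prop :=
  T.E a b ∧ T.E s t ∧ (a, b) ≠ (s, t) ∧ ¬ ReflTransGen T.E t a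

lemma addArcE_outdeg_inl (hab : T.E a b) (hst : T.E s t) (hne : (a, b) ≠ (s, t)) (p : T.V) :
    outdeg (addArcE T a b s t) (inl p) = outdeg T.E p := by
  classical
  let f : T.V → T.V ⊕ Bool := fun q =>
    if (p, q) = (a, b) then inr false else if (p, q) = (s, t) then inr true else inl q
  have himage : {w | addArcE T a b s t (inl p) w} = f '' {q | T.E p q} := by
    ext (q | _ | _) <;> simp [addArcE, f] <;> grind
  have hinj : Set.InjOn f {q | T.E p q} := by
    intro q _ q' _; simp only [f]; split_ifs <;> grind
  rw [outdeg_eq_ncard, outdeg_eq_ncard, himage, hinj.ncard_image]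

lemma addArcE_indeg_inl (hab : T.E a b) (hst : T.E s t) (hne : (a, b) ≠ (s, t)) (p : T.V) :
    indeg (addArcE T a b s t) (inl p) = indeg T.E p := by
  classical
  let f : T.V → T.V ⊕ Bool := fun q =>
    if (q, p) = (a, b) then inr false else if (q, p) = (s, t) then inr true else inl q
  have himage : {w | addArcE T a b s t w (inl p)} = f '' {q | T.E q p} := by
    ext (q | _ | _) <;> simp [addArcE, f] <;> grind
  have hinj : Set.InjOn f {q | T.E q p} := by
    intro q _ q' _; simp only [f]; split_ifs <;> grind
  rw [indeg_eq_ncard, indeg_eq_ncard, himage, hinj.ncard_image]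

lemma addArcE_isSplit : IsSplit (addArcE T a b s t) (inr false) := by
  rw [IsSplit, indeg_eq_ncard, outdeg_eq_ncard,
    show {u | addArcE T a b s t u (inr false)} = {inl a} by ext (_ | _ | _) <;> simp [addArcE],
    show {w | addArcE T a b s t (inr false) w} = {inl b, inr true} by
      ext (_ | _ | _) <;> simp [addArcE]]
  exact ⟨Set.ncard_singleton _, Set.ncard_pair (by simp)⟩

lemma addArcE_isRetic : IsRetic (addArcE T a b s t) (inr true) := by
  rw [IsRetic, indeg_eq_ncard, outdeg_eq_ncard,
    show {u | addArcE T a b s t u (inr true)} = {inl s, inr false} by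
      ext (_ | _ | _) <;> simp [addArcE],
    show {w | addArcE T a b s t (inr true) w} = {inl t} by ext (_ | _ | _) <;> simp [addArcE]]
  exact ⟨Set.ncard_pair (by simp), Set.ncard_singleton _⟩

/-- A height on `T` with `a` below `t` (it exists since `t ↛* a`) spreads out to a height on
`addArcE`, putting `inr false` just above `a` and `inr true` just below `t`. -/
lemma addArcE_acyclic (hT : Acyclic T.E) (hab : T.E a b) (hst : T.E s t)
    (hta : ¬ ReflTransGen T.E t a) : Acyclic (addArcE T a b s t) := by
  obtain ⟨h, hh⟩ := (hT.sup_arc hta).exists_height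
  have hE : ∀ p q, T.E p q → h p < h q := fun p q e => hh p q (Or.inl e)
  have hat : h a < h t := hh a t (Or.inr ⟨rfl, rfl⟩)
  refine acyclic_of_lt (fun v => match v with
    | inl p => 3 * h p
    | inr false => 3 * h a + 1
    | inr true => 3 * h t - 1) ?_
  rintro (p | _ | _) (q | _ | _) e <;> simp only [addArcE] at e
  all_goals first
    | exact e.elim
    | (have := hE _ _ e.1; simp only; omega)
    | (subst e; have := hE _ _ hab; have := hE _ _ hst; simp only; omega)
    | (simp only; omega)

lemma addArc_valid (hT : IsTree T) (h : IsAdmissibleArc T a b s t) :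
    (addArc T a b s t).valid := by
  obtain ⟨hab, hst, hne, hta⟩ := h
  have hin := addArcE_indeg_inl hab hst hne
  have hout := addArcE_outdeg_inl hab hst hne
  have hx : IsSplit (addArcE T a b s t) (inr false) := addArcE_isSplit
  have hy : IsRetic (addArcE T a b s t) (inr true) := addArcE_isRetic
  obtain ⟨ρ, hρ, hρu⟩ := hT.1.root_unique
  refine ⟨addArcE_acyclic hT.1.acyclic hab hst hta, ⟨inl ρ, ?_, ?_⟩, ?_, ?_, ?_⟩
  · simpa [addArc, IsRoot, hin, hout] using hρ
  · rintro (p | _ | _) hp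
    · simp only [addArc, IsRoot, hin, hout] at hp
      rw [hρu p hp]
    · exact absurd hp.1 (by simp [addArc, hx.1])
    · exact absurd hp.1 (by simp [addArc, hy.1])
  · exact fun z w hzw => hT.1.lab_inj (Sum.inl_injective hzw)
  · rintro (p | _ | _)
    · simp only [addArc, IsLeafNode, hin, hout]
      exact (hT.1.leaf_iff p).trans ⟨fun ⟨z, hz⟩ => ⟨z, congrArg inl hz⟩,
        fun ⟨z, hz⟩ => ⟨z, Sum.inl_injective hz⟩⟩
    · simp only [addArc, IsLeafNode, hx.2]
      exact ⟨by omega, fun ⟨_, hz⟩ => (Sum.inl_ne_inr hz).elim⟩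
    · simp only [addArc, IsLeafNode, hy.2]
      exact ⟨by omega, fun ⟨_, hz⟩ => (Sum.inl_ne_inr hz).elim⟩
  · rintro (p | _ | _)
    · simpa [addArc, IsRoot, IsLeafNode, IsSplit, IsRetic, hin, hout] using hT.1.node_types p
    · exact Or.inr (Or.inr (Or.inl hx))
    · exact Or.inr (Or.inr (Or.inr hy))

end AddArc

section Moves

variable {X : Type} {T : Net X}

lemma NetIso.symm {A B : Net X} (h : NetIso A B) : NetIso B A := by
  obtain ⟨ψ, hE, hlab⟩ := h
  refine ⟨ψ.symm, fun u v => ?_, fun z => ?_⟩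
  · rw [hE, Equiv.apply_symm_apply, Equiv.apply_symm_apply]
  · rw [← hlab, Equiv.symm_apply_apply]

lemma NetIso.connectedBy {A B : Net X} (h : NetIso A B) : ConnectedBy HeadMoveStep A B :=
  ReflTransGen.single (Or.inr h)

lemma headMoveStep_addArc (hT : IsTree T) {a b s t s' t' : T.V} (h : IsAdmissibleArc T a b s t)
    (h' : IsAdmissibleArc T a b s' t') (hne : (s, t) ≠ (s', t')) :
    HeadMoveStep (addArc T a b s t) (addArc T a b s' t') := by
  refine ⟨addArc_valid hT h, addArc_valid hT h', inr false, inr true, inl s, inl t, inl s',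
    inl t', trivial, rfl, Sum.inl_ne_inr, rfl, ⟨h'.2.1, Ne.symm h'.2.2.1, Ne.symm hne⟩,
    Equiv.refl _, fun (z w : T.V ⊕ Bool) => ?_, fun _ => rfl⟩
  change headMoveEdges (addArcE T a b s t) (inr false) (inr true) (inl s) (inl t) (inl s')
    (inl t') z w ↔ addArcE T a b s' t' z w
  rcases z with p | _ | _ <;> rcases w with q | _ | _ <;> simp [headMoveEdges, addArcE]
  grind [IsAdmissibleArc]

lemma connectedBy_addArc_of_tail_eq (hT : IsTree T) {a b s t s' t' : T.V}
    (h : IsAdmissibleArc T a b s t) (h' : IsAdmissibleArc T a b s' t') :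
    ConnectedBy HeadMoveStep (addArc T a b s t) (addArc T a b s' t') := by
  by_cases hst : (s, t) = (s', t')
  · obtain ⟨rfl, rfl⟩ := Prod.ext_iff.1 hst
    exact ReflTransGen.refl
  · exact ReflTransGen.single (Or.inl (headMoveStep_addArc hT h h' hst))

/-- Below the split vertex `a` with parent `p` and children `b`, `d`, the new arc forms a
triangle with `a`; swapping `a` and the vertex `inr false` moves the triangle from `(p, a)` down
to `(a, b)`. -/
lemma netIso_addArc_triangle (hT : T.valid) {p a b d : T.V} (ha : IsSplit T.E a)
    (hpa : T.E p a) (hab : T.E a b) (had : T.E a d) (hbd : b ≠ d) :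
    NetIso (addArc T p a a d) (addArc T a b a d) := by
  classical
  have hin : ∀ q, T.E q a → q = p := fun q hq => eq_of_indeg_le_one ha.1.le hq hpa
  have hout : ∀ q, T.E a q → q = b ∨ q = d := fun q hq =>
    eq_or_eq_of_outdeg_le_two ha.2.le hab had hbd hq
  have hpa' := hT.acyclic.ne hpa
  have hlab : ∀ z, T.lab z ≠ a := fun z hz =>
    absurd ((hT.leaf_iff _).2 ⟨z, hz⟩).2 (outdeg_pos hab).ne'
  refine ⟨(Equiv.swap (inl a) (inr false) : T.V ⊕ Bool ≃ T.V ⊕ Bool), fun z w => ?_,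
    fun z => ?_⟩
  · change addArcE T p a a d z w ↔
      addArcE T a b a d (Equiv.swap (inl a) (inr false) z) (Equiv.swap (inl a) (inr false) w)
    rcases z with q | _ | _ <;> rcases w with r | _ | _ <;>
      simp [Equiv.swap_apply_def, addArcE] <;> grind
  · change Equiv.swap (inl a) (inr false) (inl (T.lab z) : T.V ⊕ Bool) = inl (T.lab z)
    exact Equiv.swap_apply_of_ne_of_ne (by simpa using hlab z) (by simp)

end Moves

section Connectivity

variable {X : Type} {T : Net X}

/-- Induction on the tail `a`: a head move to the other child arc `(a, d)`, followed by the
triangle relocation, moves the tail one arc up. -/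
lemma exists_rootArc_connectedBy (hT : IsTree T) {ρ c : T.V} (hρ : IsRoot T.E ρ)
    (hρc : T.E ρ c) (a : T.V) : ∀ b s t, IsAdmissibleArc T a b s t →
      ∃ s' t', IsAdmissibleArc T ρ c s' t' ∧
        ConnectedBy HeadMoveStep (addArc T a b s t) (addArc T ρ c s' t') ∧
        ConnectedBy HeadMoveStep (addArc T ρ c s' t') (addArc T a b s t) := by
  have hacyc := hT.1.acyclic
  induction a using hacyc.wellFounded.induction with
  | _ a ih =>
  intro b s t h
  by_cases ha : IsRoot T.E a
  · obtain rfl : a = ρ := hT.1.root_unique.unique ha hρ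
    obtain rfl : b = c := eq_of_outdeg_le_one ha.2.le h.1 hρc
    exact ⟨s, t, h, .refl, .refl⟩
  obtain ⟨p, hpa⟩ := hT.exists_parent ha
  have hsplit : IsSplit T.E a := by
    rcases hT.node_types a with h' | h' | h'
    exacts [absurd h' ha, absurd h'.2 (outdeg_pos h.1).ne', h']
  obtain ⟨d, had, hdb⟩ := exists_ne_of_outdeg_eq_two hsplit.2 b
  have h₁ : IsAdmissibleArc T a b a d := ⟨h.1, had, fun e => hdb (Prod.ext_iff.1 e).2.symm,
    fun hda => hacyc a (TransGen.head' had hda)⟩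
  have h₂ : IsAdmissibleArc T p a a d := ⟨hpa, had, fun e => hacyc.ne hpa (Prod.ext_iff.1 e).1,
    fun hdp => hacyc a (TransGen.head' had (hdp.tail hpa))⟩
  have hiso := netIso_addArc_triangle hT.1 hsplit hpa h.1 had hdb.symm
  obtain ⟨s', t', h', hto, hfrom⟩ := ih p hpa a a d h₂
  exact ⟨s', t', h',
    ((connectedBy_addArc_of_tail_eq hT h h₁).trans hiso.symm.connectedBy).trans hto,
    hfrom.trans (hiso.connectedBy.trans (connectedBy_addArc_of_tail_eq hT h₁ h))⟩

lemma connectedBy_addArc (hT : IsTree T) {a b s t a' b' s' t' : T.V}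
    (h : IsAdmissibleArc T a b s t) (h' : IsAdmissibleArc T a' b' s' t') :
    ConnectedBy HeadMoveStep (addArc T a b s t) (addArc T a' b' s' t') := by
  obtain ⟨ρ, hρ, -⟩ := hT.1.root_unique
  obtain ⟨c, hc⟩ := exists_of_outdeg_ne_zero (hρ.2 ▸ one_ne_zero)
  obtain ⟨s₁, t₁, h₁, hto, -⟩ := exists_rootArc_connectedBy hT hρ hc a b s t h
  obtain ⟨s₂, t₂, h₂, -, hfrom⟩ := exists_rootArc_connectedBy hT hρ hc a' b' s' t' h'
  exact (hto.trans (connectedBy_addArc_of_tail_eq hT h₁ h₂)).trans hfrom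

end Connectivity

section Recognition

variable {X : Type} {T N : Net X} {a b s t : T.V}

lemma netIso_addArc_of_edge_iff {φ : T.V → N.V} {x y : N.V} (hφ : Function.Injective φ)
    (hx : x ∉ Set.range φ) (hy : y ∉ Set.range φ) (hxy : x ≠ y)
    (hcover : ∀ v, v ∉ Set.range φ → v = x ∨ v = y) (hlab : ∀ z, φ (T.lab z) = N.lab z)
    (hE : ∀ p q, N.E (φ p) (φ q) ↔ T.E p q ∧ (p, q) ≠ (a, b) ∧ (p, q) ≠ (s, t))
    (hEx : ∀ v, N.E v x ↔ v = φ a) (hxE : ∀ w, N.E x w ↔ w = φ b ∨ w = y)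
    (hEy : ∀ v, N.E v y ↔ v = φ s ∨ v = x) (hyE : ∀ w, N.E y w ↔ w = φ t) :
    NetIso (addArc T a b s t) N := by
  let ψ : T.V ⊕ Bool → N.V := fun v => match v with
    | inl p => φ p
    | inr false => x
    | inr true => y
  have hψ : Function.Bijective ψ := by
    refine ⟨?_, fun v => ?_⟩
    · rintro (p | _ | _) (q | _ | _) e <;> simp only [ψ] at e
      all_goals first
        | rfl | exact congrArg inl (hφ e) | exact absurd e hxy | exact absurd e.symm hxy
        | exact (hx ⟨_, e⟩).elim | exact (hy ⟨_, e⟩).elim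
        | exact (hx ⟨_, e.symm⟩).elim | exact (hy ⟨_, e.symm⟩).elim
    · by_cases hv : v ∈ Set.range φ
      · obtain ⟨p, rfl⟩ := hv
        exact ⟨inl p, rfl⟩
      · rcases hcover v hv with rfl | rfl
        exacts [⟨inr false, rfl⟩, ⟨inr true, rfl⟩]
  refine ⟨Equiv.ofBijective ψ hψ, fun v w => ?_, hlab⟩
  change addArcE T a b s t v w ↔ N.E (ψ v) (ψ w)
  rcases v with p | _ | _ <;> rcases w with q | _ | _ <;>
    simp [ψ, addArcE, hE, hEx, hxE, hEy, hyE] <;> grind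

end Recognition

section Subdivision

variable {V W : Type} {E' : V → V → Prop} {φ : W → V}

def SubdivStep (E' : V → V → Prop) (φ : W → V) (v w : V) : Prop :=
  v ∉ Set.range φ ∧ E' v w

lemma exists_chain_iff {v w : V} :
    (∃ l : List V, List.Chain E' v (l ++ [w]) ∧ ∀ x ∈ l, x ∉ Set.range φ) ↔
      ∃ z, E' v z ∧ ReflTransGen (SubdivStep E' φ) z w := by
  constructor
  · rintro ⟨l, hl, hmem⟩
    induction l generalizing v with
    | nil => exact ⟨w, by simpa [List.Chain] using hl, .refl⟩
    | cons z l ih =>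
      simp only [List.Chain, List.cons_append, List.isChain_cons_cons] at hl
      obtain ⟨z', hz', hz'w⟩ := ih hl.2 fun x hx => hmem x (List.mem_cons_of_mem _ hx)
      exact ⟨z, hl.1, .head ⟨hmem z List.mem_cons_self, hz'⟩ hz'w⟩
  · rintro ⟨z, hvz, hzw⟩
    induction hzw using ReflTransGen.head_induction_on generalizing v with
    | refl => exact ⟨[], by simpa [List.Chain] using hvz, by simp⟩
    | @head u _ hzz' _ ih =>
      obtain ⟨l, hl, hmem⟩ := ih hzz'.2
      refine ⟨u :: l, ?_, ?_⟩
      · simpa [List.Chain] using And.intro hvz hl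
      · exact List.forall_mem_cons.2 ⟨hzz'.1, hmem⟩

end Subdivision

structure IsTreeEmbedding {X : Type} (T N : Net X) (E' : N.V → N.V → Prop) (φ : T.V → N.V) :
    Prop where
  isTree : IsTree T
  valid : N.valid
  sub : ∀ v w, E' v w → N.E v w
  subdivision : IsSubdivision T.E E' φ
  lab : ∀ x, φ (T.lab x) = N.lab x

namespace IsTreeEmbedding

variable {X : Type} {T N : Net X} {E' : N.V → N.V → Prop} {φ : T.V → N.V}
  {p q u a b s t : T.V} {v w x y z z' : N.V}

lemma injective (h : IsTreeEmbedding T N E' φ) : Function.Injective φ :=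
  h.subdivision.1

lemma degrees_of_notMem_range (h : IsTreeEmbedding T N E' φ) (hv : v ∉ Set.range φ) :
    indeg E' v = 1 ∧ outdeg E' v = 1 :=
  h.subdivision.2.1 v hv

lemma edge_iff (h : IsTreeEmbedding T N E' φ) :
    T.E p q ↔ ∃ z, E' (φ p) z ∧ ReflTransGen (SubdivStep E' φ) z (φ q) :=
  (h.subdivision.2.2 p q).trans exists_chain_iff

/-- Subdivision vertices have a unique successor in `E'`. -/
lemma eq_of_reflTransGen (h : IsTreeEmbedding T N E' φ)
    (hq : ReflTransGen (SubdivStep E' φ) z (φ q))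
    (hq' : ReflTransGen (SubdivStep E' φ) z (φ q')) :
    q = q' := by
  have hunique : Relator.RightUnique (SubdivStep E' φ) := fun _ _ _ hw hw' =>
    eq_of_outdeg_le_one (h.degrees_of_notMem_range hw.1).2.le hw.2 hw'.2
  have hend : ∀ {q w}, ReflTransGen (SubdivStep E' φ) (φ q) w → φ q = w := fun hw =>
    hw.cases_head.resolve_right fun ⟨_, hs, _⟩ => hs.1 ⟨_, rfl⟩
  apply h.injective
  rcases ReflTransGen.total_of_right_unique hunique hq hq' with e | e
  exacts [hend e, (hend e).symm]

lemma transGen_of_edge (h : IsTreeEmbedding T N E' φ) (hpq : T.E p q) :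
    TransGen N.E (φ p) (φ q) := by
  obtain ⟨z, hz, hzq⟩ := h.edge_iff.1 hpq
  exact TransGen.head' (h.sub _ _ hz) (ReflTransGen.mono (fun _ _ e => h.sub _ _ e.2) _ _ hzq)

lemma indeg_pos_of_edge (h : IsTreeEmbedding T N E' φ) (hpq : T.E p q) :
    0 < indeg E' (φ q) := by
  obtain ⟨z, hz, hzq⟩ := h.edge_iff.1 hpq
  rcases hzq.cases_tail with rfl | ⟨c, -, hc⟩
  exacts [indeg_pos hz, indeg_pos hc.2]

lemma isRoot_map (h : IsTreeEmbedding T N E' φ) (hr : IsRoot T.E u) : IsRoot N.E (φ u) := by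
  obtain ⟨ρ, hρ, -⟩ := h.valid.root_unique
  obtain ⟨w, rfl⟩ : ρ ∈ Set.range φ := by
    by_contra hρ'
    have := indeg_mono h.sub ρ
    have := (h.degrees_of_notMem_range hρ').1
    have := hρ.1
    omega
  have hw : IsRoot T.E w := by
    by_contra hw
    obtain ⟨p, hp⟩ := h.isTree.exists_parent hw
    have := h.indeg_pos_of_edge hp
    have := indeg_mono h.sub (φ w)
    have := hρ.1
    omega
  rwa [h.isTree.1.root_unique.unique hr hw]

lemma isLeafNode_map (h : IsTreeEmbedding T N E' φ) (hq : IsLeafNode T.E q) :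
    IsLeafNode N.E (φ q) := by
  obtain ⟨x, rfl⟩ := (h.isTree.1.leaf_iff q).1 hq
  exact (h.valid.leaf_iff _).2 ⟨x, (h.lab x).symm⟩

lemma exists_injective_firstStep (h : IsTreeEmbedding T N E' φ) (u : T.V) :
    ∃ f : {q // T.E u q} → {z // E' (φ u) z}, Function.Injective f ∧
      ∀ q, ReflTransGen (SubdivStep E' φ) (f q) (φ q) := by
  choose g hg using fun q : {q // T.E u q} => h.edge_iff.1 q.2
  refine ⟨fun q => ⟨g q, (hg q).1⟩, fun q q' e => Subtype.ext ?_, fun q => (hg q).2⟩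
  have e' : g q = g q' := congrArg Subtype.val e
  exact h.eq_of_reflTransGen (hg q).2 (e' ▸ (hg q').2)

lemma outdeg_map (h : IsTreeEmbedding T N E' φ) (u : T.V) :
    outdeg E' (φ u) = outdeg T.E u ∧ outdeg N.E (φ u) = outdeg T.E u := by
  obtain ⟨f, hf, -⟩ := h.exists_injective_firstStep u
  have hle : outdeg T.E u ≤ outdeg E' (φ u) := Nat.card_le_card_of_injective f hf
  have hsub := outdeg_mono h.sub (φ u)
  rcases h.isTree.node_types u with hu | hu | hu
  · have := (h.isRoot_map hu).2; have := hu.2; omega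
  · have := (h.isLeafNode_map hu).2; have := hu.2; omega
  · have := h.valid.outdeg_le_two (φ u); have := hu.2; omega

/-- The first steps of the paths realizing the arcs out of `u` are distinct, and by counting they
exhaust the successors of `φ u` in `E'`. -/
lemma eq_of_sub_of_reflTransGen (h : IsTreeEmbedding T N E' φ) (hz : E' (φ u) z)
    (hz' : E' (φ u) z') (hzq : ReflTransGen (SubdivStep E' φ) z (φ q))
    (hz'q : ReflTransGen (SubdivStep E' φ) z' (φ q)) : z = z' := by
  obtain ⟨f, hf, hfq⟩ := h.exists_injective_firstStep u
  have hsurj := (hf.bijective_of_nat_card_le (h.outdeg_map u).1.le).2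
  obtain ⟨q₁, hq₁⟩ := hsurj ⟨z, hz⟩
  obtain ⟨q₂, hq₂⟩ := hsurj ⟨z', hz'⟩
  have e₁ : q₁.1 = q := h.eq_of_reflTransGen (by simpa [hq₁] using hfq q₁) hzq
  have e₂ : q₂.1 = q := h.eq_of_reflTransGen (by simpa [hq₂] using hfq q₂) hz'q
  obtain rfl : q₁ = q₂ := Subtype.ext (e₁.trans e₂.symm)
  exact congrArg Subtype.val (hq₁.symm.trans hq₂)

lemma not_isRetic_map (h : IsTreeEmbedding T N E' φ) (u : T.V) : ¬ IsRetic N.E (φ u) := by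
  intro hr
  have hu := (h.outdeg_map u).2
  rcases h.isTree.node_types u with hu' | hu' | hu'
  · have := (h.isRoot_map hu').1; have := hr.1; omega
  · have := hu'.2; have := hr.2; omega
  · have := hu'.2; have := hr.2; omega

lemma notMem_range_of_isRetic (h : IsTreeEmbedding T N E' φ) (hv : IsRetic N.E v) :
    v ∉ Set.range φ := by
  rintro ⟨u, rfl⟩
  exact h.not_isRetic_map u hv

lemma sub_of_edge_from_map (h : IsTreeEmbedding T N E' φ) (hw : N.E (φ u) w) : E' (φ u) w :=
  rel_of_outdeg_le h.sub (by rw [(h.outdeg_map u).1, (h.outdeg_map u).2]) hw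

lemma sub_of_edge_to_map (h : IsTreeEmbedding T N E' φ) (hv : N.E v (φ q)) : E' v (φ q) := by
  refine rel_of_indeg_le h.sub ?_ hv
  have hN := h.valid.indeg_le_one (h.not_isRetic_map q)
  by_cases hq : IsRoot T.E q
  · have := (h.isRoot_map hq).1; omega
  · obtain ⟨p, hp⟩ := h.isTree.exists_parent hq
    have := h.indeg_pos_of_edge hp; omega

lemma eq_of_not_sub (h : IsTreeEmbedding T N E' φ) (hy : ∀ v, IsRetic N.E v ↔ v = y)
    (hvw : N.E v w) (hn : ¬ E' v w) : w = y := by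
  have hw : w ∉ Set.range φ := by
    rintro ⟨q, rfl⟩
    exact hn (h.sub_of_edge_to_map hvw)
  refine (hy w).1 (by_contra fun hr => hn (rel_of_indeg_le h.sub ?_ hvw))
  have := h.valid.indeg_le_one hr
  have := (h.degrees_of_notMem_range hw).1
  omega

/-- A subdivision vertex other than `y` is a split vertex of `N`, so it is the tail of an arc
outside `E'`; that arc ends at `y`, whose only parent outside `E'` is `x`. -/
lemma eq_or_eq_of_notMem_range (h : IsTreeEmbedding T N E' φ)
    (hy : ∀ v, IsRetic N.E v ↔ v = y) (hxy : N.E x y) (hx : ¬ E' x y)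
    (hv : v ∉ Set.range φ) : v = x ∨ v = y := by
  by_cases hvy : v = y
  · exact Or.inr hvy
  have hdeg := h.degrees_of_notMem_range hv
  have hsplit : IsSplit N.E v := by
    rcases h.valid.node_types v with h' | h' | h' | h'
    · have := indeg_mono h.sub v; have := h'.1; omega
    · have := outdeg_mono h.sub v; have := h'.2; omega
    · exact h'
    · exact absurd ((hy v).1 h') hvy
  obtain ⟨w, hvw, hn⟩ := exists_not_of_outdeg_lt (E := E') (F := N.E) (v := v)
    (by have := hsplit.2; omega)
  obtain rfl := h.eq_of_not_sub hy hvw hn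
  have hyr : IsRetic N.E w := (hy w).2 rfl
  obtain ⟨s, hs⟩ : ∃ s, E' s w := exists_of_indeg_ne_zero
    (by have := (h.degrees_of_notMem_range (h.notMem_range_of_isRetic hyr)).1; omega)
  rcases eq_or_eq_of_indeg_le_two hyr.1.le (h.sub _ _ hs) hxy (fun e => hx (e ▸ hs)) hvw with
    e | e
  · exact absurd (e ▸ hs) hn
  · exact Or.inl e

lemma exists_image_neighbors (h : IsTreeEmbedding T N E' φ)
    (hcover : ∀ v, v ∉ Set.range φ → v = x ∨ v = y) (hxφ : x ∉ Set.range φ)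
    (hyφ : y ∉ Set.range φ) (hxy : N.E x y) (hx : ¬ E' x y) :
    ∃ a b s t, E' (φ a) x ∧ E' x (φ b) ∧ E' (φ s) y ∧ E' y (φ t) := by
  have hacyc := h.valid.acyclic
  have hxd := h.degrees_of_notMem_range hxφ
  have hyd := h.degrees_of_notMem_range hyφ
  have hmem : ∀ {v}, v ≠ x → v ≠ y → v ∈ Set.range φ := fun hvx hvy => by
    by_contra hv
    exact (hcover _ hv).elim hvx hvy
  have hyx : ¬ N.E y x := fun e => hacyc x (TransGen.head hxy (TransGen.single e))
  obtain ⟨a', ha'⟩ := exists_of_indeg_ne_zero (E := E') (v := x) (by omega)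
  obtain ⟨a, rfl⟩ := hmem (hacyc.ne (h.sub _ _ ha')) (by rintro rfl; exact hyx (h.sub _ _ ha'))
  obtain ⟨b', hb'⟩ := exists_of_outdeg_ne_zero (E := E') (v := x) (by omega)
  obtain ⟨b, rfl⟩ := hmem (hacyc.ne (h.sub _ _ hb')).symm (by rintro rfl; exact hx hb')
  obtain ⟨s', hs'⟩ := exists_of_indeg_ne_zero (E := E') (v := y) (by omega)
  obtain ⟨s, rfl⟩ := hmem (by rintro rfl; exact hx hs') (hacyc.ne (h.sub _ _ hs'))
  obtain ⟨t', ht'⟩ := exists_of_outdeg_ne_zero (E := E') (v := y) (by omega)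
  obtain ⟨t, rfl⟩ :=
    hmem (by rintro rfl; exact hyx (h.sub _ _ ht')) (hacyc.ne (h.sub _ _ ht')).symm
  exact ⟨a, b, s, t, ha', hb', hs', ht'⟩

lemma isAdmissibleArc (h : IsTreeEmbedding T N E' φ) (hxφ : x ∉ Set.range φ)
    (hyφ : y ∉ Set.range φ) (hxy : N.E x y) (ha : E' (φ a) x) (hb : E' x (φ b))
    (hs : E' (φ s) y) (ht : E' y (φ t)) : IsAdmissibleArc T a b s t := by
  have hxb : ReflTransGen (SubdivStep E' φ) x (φ b) := .single ⟨hxφ, hb⟩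
  have hyt : ReflTransGen (SubdivStep E' φ) y (φ t) := .single ⟨hyφ, ht⟩
  refine ⟨h.edge_iff.2 ⟨x, ha, hxb⟩, h.edge_iff.2 ⟨y, hs, hyt⟩, fun e => ?_,
    fun hta => ?_⟩
  · obtain ⟨rfl, rfl⟩ := Prod.ext_iff.1 e
    exact h.valid.acyclic.ne hxy (h.eq_of_sub_of_reflTransGen ha hs hxb hyt)
  · have hN := ReflTransGen.lift' φ (fun _ _ e => (h.transGen_of_edge e).to_reflTransGen) _ _ hta
    exact h.valid.acyclic x
      (TransGen.head hxy (TransGen.head' (h.sub _ _ ht) (hN.tail (h.sub _ _ ha))))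

lemma edge_map_iff (h : IsTreeEmbedding T N E' φ)
    (hcover : ∀ v, v ∉ Set.range φ → v = x ∨ v = y) (hxφ : x ∉ Set.range φ)
    (hyφ : y ∉ Set.range φ) (ha : E' (φ a) x) (hb : E' x (φ b)) (hs : E' (φ s) y)
    (ht : E' y (φ t)) :
    N.E (φ p) (φ q) ↔ T.E p q ∧ (p, q) ≠ (a, b) ∧ (p, q) ≠ (s, t) := by
  have hxb : ReflTransGen (SubdivStep E' φ) x (φ b) := .single ⟨hxφ, hb⟩
  have hyt : ReflTransGen (SubdivStep E' φ) y (φ t) := .single ⟨hyφ, ht⟩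
  constructor
  · intro hpq
    have hE' := h.sub_of_edge_from_map hpq
    refine ⟨h.edge_iff.2 ⟨_, hE', .refl⟩, fun e => ?_, fun e => ?_⟩ <;>
      obtain ⟨rfl, rfl⟩ := Prod.ext_iff.1 e
    · exact hxφ ⟨q, h.eq_of_sub_of_reflTransGen hE' ha .refl hxb⟩
    · exact hyφ ⟨q, h.eq_of_sub_of_reflTransGen hE' hs .refl hyt⟩
  · rintro ⟨hpq, hab, hst⟩
    obtain ⟨z, hz, hzq⟩ := h.edge_iff.1 hpq
    by_cases hzφ : z ∈ Set.range φ
    · obtain ⟨q', rfl⟩ := hzφ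
      obtain rfl := h.eq_of_reflTransGen .refl hzq
      exact h.sub _ _ hz
    · rcases hcover z hzφ with rfl | rfl
      · have hpa := h.injective (eq_of_indeg_le_one (h.degrees_of_notMem_range hxφ).1.le hz ha)
        exact absurd (by rw [hpa, h.eq_of_reflTransGen hzq hxb]) hab
      · have hps := h.injective (eq_of_indeg_le_one (h.degrees_of_notMem_range hyφ).1.le hz hs)
        exact absurd (by rw [hps, h.eq_of_reflTransGen hzq hyt]) hst

lemma exists_netIso_addArc (h : IsTreeEmbedding T N E' φ) (h1 : reticCount N.E = 1) :
    ∃ a b s t, IsAdmissibleArc T a b s t ∧ NetIso (addArc T a b s t) N := by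
  obtain ⟨y, hy⟩ := exists_isRetic_iff_of_reticCount_eq_one h1
  have hyr : IsRetic N.E y := (hy y).2 rfl
  have hyφ := h.notMem_range_of_isRetic hyr
  obtain ⟨x, hxy, hx⟩ := exists_not_of_indeg_lt (E := E') (F := N.E) (v := y)
    (by rw [hyr.1, (h.degrees_of_notMem_range hyφ).1]; norm_num)
  have hxφ : x ∉ Set.range φ := by
    rintro ⟨u, rfl⟩
    exact hx (h.sub_of_edge_from_map hxy)
  have hxy' : x ≠ y := h.valid.acyclic.ne hxy
  have hxr : ¬ IsRetic N.E x := fun hr => hxy' ((hy x).1 hr)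
  have hcover := fun v => h.eq_or_eq_of_notMem_range (v := v) hy hxy hx
  obtain ⟨a, b, s, t, ha, hb, hs, ht⟩ := h.exists_image_neighbors hcover hxφ hyφ hxy hx
  refine ⟨a, b, s, t, h.isAdmissibleArc hxφ hyφ hxy ha hb hs ht,
    netIso_addArc_of_edge_iff h.injective hxφ hyφ hxy' hcover h.lab
      (fun _ _ => h.edge_map_iff hcover hxφ hyφ ha hb hs ht) (fun v => ?_) (fun w => ?_)
      (fun v => ?_) (fun w => ?_)⟩
  · exact ⟨fun hv => eq_of_indeg_le_one (h.valid.indeg_le_one hxr) hv (h.sub _ _ ha),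
      fun e => e ▸ h.sub _ _ ha⟩
  · refine ⟨fun hw => eq_or_eq_of_outdeg_le_two (h.valid.outdeg_le_two x) (h.sub _ _ hb) hxy
      (fun e => hyφ ⟨b, e⟩) hw, ?_⟩
    rintro (rfl | rfl)
    exacts [h.sub _ _ hb, hxy]
  · refine ⟨fun hv => eq_or_eq_of_indeg_le_two hyr.1.le (h.sub _ _ hs) hxy
      (fun e => hxφ ⟨s, e⟩) hv, ?_⟩
    rintro (rfl | rfl)
    exacts [h.sub _ _ hs, hxy]
  · exact ⟨fun hw => eq_of_outdeg_le_one hyr.2.le hw (h.sub _ _ ht),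
      fun e => e ▸ h.sub _ _ ht⟩

end IsTreeEmbedding

/-- tier-1 networks on the same leaf set with a common embedded tree are
connected by a finite sequence of head moves. -/
theorem tier1_common_tree_connected {X : Type} (N N' T : Net X)
    (hN : N.valid) (hN' : N'.valid)
    (h1 : reticCount N.E = 1) (h1' : reticCount N'.E = 1)
    (hT : EmbeddedTree T N) (hT' : EmbeddedTree T N') :
    ConnectedBy HeadMoveStep N N' := by
  obtain ⟨hTree, E, φ, hle, hsub, hlab⟩ := hT
  obtain ⟨-, E', φ', hle', hsub', hlab'⟩ := hT'
  obtain ⟨a, b, s, t, h, hiso⟩ :=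
    IsTreeEmbedding.exists_netIso_addArc ⟨hTree, hN, hle, hsub, hlab⟩ h1
  obtain ⟨a', b', s', t', h', hiso'⟩ :=
    IsTreeEmbedding.exists_netIso_addArc ⟨hTree, hN', hle', hsub', hlab'⟩ h1'
  exact (hiso.symm.connectedBy.trans (connectedBy_addArc hTree h h')).trans hiso'.connectedBy

end Phylo
end
end

section
/- Let N be a binary phylogenetic network with k reticulations 'at the top' (there is a child c of the root, nodes a_i, b_i for i = 1..k with edges (a_i,b_i), edges (c,a_1),(c,b_1), and for each i < k either edges (a_i,a_{i+1}),(b_i,b_{i+1}) or edges (a_i,b_{i+1}),(b_i,a_{i+1})). Then there is a sequence of at most k head moves transforming N into a network in which all k reticulations are neatly at the top (i.e., for each i < k the edges are (a_i,a_{i+1}) and (b_i,b_{i+1})), and this sequence does not alter the subnetwork below a_k and b_k. -/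
noncomputable section

namespace Phylo

/-!
At a crossed level `i`, with edges `(a i, b (i+1))` and `(b i, a (i+1))`, take the head move of
`(u, b i)` onto `(a i, b (i+1))`, where `u` is the other parent of `b i`. Since the moved head
`b i` keeps its name, the move only replaces the two crossing edges by `(a i, a (i+1))` and
`(b i, b (i+1))`; the paper relabels instead, which is why it speaks of reversing every level
above `i`. This exchange of heads preserves all in- and out-degrees, and each new edge is
bypassed by a path of length two in the old network, so the result is again a network with
reticulations at the top in which the other levels keep their shape. Only `a i` and `b i` get
new out-edges, and both lie strictly above `a k` and `b k`, so nothing below those changes.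
Uncrossing the levels one at a time takes at most one move per level.
-/

section Digraph

variable {V : Type} {E : V → V → Prop}

lemma eq_of_indeg_eq_one {v u w : V} (h : indeg E v = 1) (hu : E u v) (hw : E w v) : u = w :=
  have := (Nat.card_eq_one_iff_unique.mp h).1
  congrArg Subtype.val (Subsingleton.elim (⟨u, hu⟩ : {u // E u v}) ⟨w, hw⟩)

lemma eq_of_outdeg_eq_one {v u w : V} (h : outdeg E v = 1) (hu : E v u) (hw : E v w) : u = w :=
  have := (Nat.card_eq_one_iff_unique.mp h).1
  congrArg Subtype.val (Subsingleton.elim (⟨u, hu⟩ : {w // E v w}) ⟨w, hw⟩)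

lemma exists_ne_of_indeg_eq_two [Finite V] {v u : V} (h : indeg E v = 2) :
    ∃ w, E w v ∧ w ≠ u := by
  by_contra! hne
  have : Subsingleton {w // E w v} :=
    ⟨fun w w' => Subtype.ext ((hne w w.2).trans (hne w' w'.2).symm)⟩
  have := Finite.card_le_one_iff_subsingleton.mpr this
  rw [indeg] at h
  omega

lemma Acyclic.of_le_transGen {E' : V → V → Prop} (hE : Acyclic E)
    (h : ∀ s t, E' s t → Relation.TransGen E s t) : Acyclic E' :=
  fun v hv => hE v (Relation.TransGen.closed h v v hv)

lemma IsPhyloNet.of_degree_eq {X : Type} [Fintype V] {lab : X → V} {E' : V → V → Prop}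
    (hN : IsPhyloNet E lab) (hac : Acyclic E') (hin : indeg E' = indeg E)
    (hout : outdeg E' = outdeg E) : IsPhyloNet E' lab where
  acyclic := hac
  root_unique := by simpa only [IsRoot, hin, hout] using hN.root_unique
  lab_inj := hN.lab_inj
  leaf_iff := by simpa only [IsLeafNode, hin, hout] using hN.leaf_iff
  node_types := by simpa only [IsRoot, IsLeafNode, IsSplit, IsRetic, hin, hout] using hN.node_types

lemma Acyclic.not_reflTransGen (hE : Acyclic E) {x z : V} (h : Relation.TransGen E x z) :
    ¬Relation.ReflTransGen E z x :=
  fun h' => hE x (h.trans_left h')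

lemma Acyclic.injOn_of_transGen {ι : Type} [LinearOrder ι] {f : ι → V} {s : Set ι}
    (hE : Acyclic E) (h : ∀ i ∈ s, ∀ j ∈ s, i < j → Relation.TransGen E (f i) (f j)) :
    s.InjOn f := by
  intro i hi j hj hij
  rcases lt_trichotomy i j with hlt | heq | hgt
  · exact absurd (hij ▸ h i hi j hj hlt) (hE _)
  · exact heq
  · exact absurd (hij ▸ h j hj i hi hgt) (hE _)

end Digraph

section SwapHeads

variable {V : Type} {E : V → V → Prop} {x y x' y' : V}

def swapHeads (E : V → V → Prop) (x y x' y' : V) : V → V → Prop := fun s t =>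
  (s, t) = (x, x') ∨ (s, t) = (y, y') ∨ (E s t ∧ (s, t) ≠ (x, y') ∧ (s, t) ≠ (y, x'))

lemma swapHeads_of_ne {s t : V} (h : E s t) (h₁ : s ≠ x ∨ t ≠ y')
    (h₂ : s ≠ y ∨ t ≠ x') : swapHeads E x y x' y' s t :=
  Or.inr (Or.inr
    ⟨h, by rwa [Ne, Prod.mk.injEq, not_and_or], by rwa [Ne, Prod.mk.injEq, not_and_or]⟩)

lemma swapHeads_iff_of_ne_left {s t : V} (hx : s ≠ x) (hy : s ≠ y) :
    swapHeads E x y x' y' s t ↔ E s t := by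
  simp [swapHeads, hx, hy]

lemma transGen_of_swapHeads (hxy : E x y) (hyx' : E y x') (hx'y' : E x' y') {s t : V}
    (h : swapHeads E x y x' y' s t) : Relation.TransGen E s t := by
  rcases h with h | h | ⟨h, -, -⟩
  · obtain ⟨rfl, rfl⟩ := Prod.mk.inj h
    exact .tail (.single hxy) hyx'
  · obtain ⟨rfl, rfl⟩ := Prod.mk.inj h
    exact .tail (.single hyx') hx'y'
  · exact .single h

lemma headMoveEdges_eq_swapHeads {u : V} (huy : E u y) (hxy : E x y) (hyx' : y ≠ x')
    (hyy' : y ≠ y') : headMoveEdges E u y x x' x y' = swapHeads E x y x' y' := by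
  funext s t
  simp only [headMoveEdges, swapHeads, ne_eq, Prod.mk.injEq]
  by_cases ht : t = y <;> by_cases hs : s = x <;> by_cases hs' : s = u <;> simp_all <;> tauto

variable (hxy : x ≠ y) (hx'y' : x' ≠ y') (hxy' : E x y') (hyx' : E y x')
  (hxx' : ¬E x x') (hyy' : ¬E y y')
include hxy hx'y' hxy' hyx' hxx' hyy'

-- The transposition `x ↔ y` matches the in-neighbours of `x'` and `y'` before and after.
lemma indeg_swapHeads : indeg (swapHeads E x y x' y') = indeg E := by
  classical
  funext t
  by_cases ht : t = x' ∨ t = y'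
  · refine Nat.card_congr (Equiv.subtypeEquiv (Equiv.swap x y) fun s => ?_)
    rcases ht with rfl | rfl <;> by_cases hsx : s = x <;> by_cases hsy : s = y <;>
      simp_all [swapHeads, Equiv.swap_apply_of_ne_of_ne, Ne.symm]
  · push Not at ht
    refine Nat.card_congr (Equiv.subtypeEquivRight fun s => ?_)
    simp [swapHeads, ht]

lemma outdeg_swapHeads : outdeg (swapHeads E x y x' y') = outdeg E := by
  classical
  funext s
  by_cases hs : s = x ∨ s = y
  · refine Nat.card_congr (Equiv.subtypeEquiv (Equiv.swap x' y') fun t => ?_)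
    rcases hs with rfl | rfl <;> by_cases htx : t = x' <;> by_cases hty : t = y' <;>
      simp_all [swapHeads, Equiv.swap_apply_of_ne_of_ne, Ne.symm]
  · push Not at hs
    exact Nat.card_congr (Equiv.subtypeEquivRight fun t => swapHeads_iff_of_ne_left hs.1 hs.2)

end SwapHeads

lemma LabIso.refl {V X : Type} (E : V → V → Prop) (lab : X → V) : LabIso E lab E lab :=
  ⟨Equiv.refl V, fun _ _ => Iff.rfl, fun _ => rfl⟩

section AgreeBelow

variable {V : Type} {E E' E'' : V → V → Prop} {z : V}

def AgreeBelow (E E' : V → V → Prop) (z : V) : Prop :=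
  ∀ w, Relation.ReflTransGen E z w → ∀ t, E w t ↔ E' w t

lemma AgreeBelow.reflTransGen_iff (h : AgreeBelow E E' z) {w : V} :
    Relation.ReflTransGen E z w ↔ Relation.ReflTransGen E' z w := by
  constructor <;> intro hw <;> induction hw with
  | refl => exact .refl
  | tail hzw hwt ih => first
    | exact ih.tail ((h _ hzw _).mp hwt)
    | exact ih.tail ((h _ ih _).mpr hwt)

lemma AgreeBelow.trans (h : AgreeBelow E E' z) (h' : AgreeBelow E' E'' z) :
    AgreeBelow E E'' z :=
  fun w hw t => (h w hw t).trans (h' w (h.reflTransGen_iff.mp hw) t)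

lemma agreeBelow_swapHeads {x y x' y' : V} (hx : ¬Relation.ReflTransGen E z x)
    (hy : ¬Relation.ReflTransGen E z y) : AgreeBelow E (swapHeads E x y x' y') z :=
  fun _ hw _ => (swapHeads_iff_of_ne_left (by rintro rfl; exact hx hw)
    (by rintro rfl; exact hy hw)).symm

end AgreeBelow

section Ladder

variable {V : Type} {E : V → V → Prop} {k : ℕ} {c : V} {a b : ℕ → V} {i j l : ℕ}

def Straight (E : V → V → Prop) (a b : ℕ → V) (j : ℕ) : Prop :=
  E (a j) (a (j + 1)) ∧ E (b j) (b (j + 1))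

def Crossed (E : V → V → Prop) (a b : ℕ → V) (j : ℕ) : Prop :=
  E (a j) (b (j + 1)) ∧ E (b j) (a (j + 1))

namespace ReticsAtTop

variable (htop : ReticsAtTop E k c a b)
include htop

lemma level (hj : 1 ≤ j) (hjk : j ≤ k) :
    E (a j) (b j) ∧ IsSplit E (a j) ∧ IsRetic E (b j) :=
  htop.2.2.2.1 j hj hjk

lemma straight_or_crossed (hj : 1 ≤ j) (hjk : j < k) : Straight E a b j ∨ Crossed E a b j :=
  htop.2.2.2.2 j hj hjk

lemma transGen_succ (hj : 1 ≤ j) (hjk : j < k) :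
    Relation.TransGen E (a j) (a (j + 1)) ∧ Relation.TransGen E (b j) (b (j + 1)) := by
  rcases htop.straight_or_crossed hj hjk with ⟨ha, hb⟩ | ⟨-, hba⟩
  · exact ⟨.single ha, .single hb⟩
  · exact ⟨.tail (.single (htop.level hj hjk.le).1) hba,
      .tail (.single hba) (htop.level (by omega) hjk).1⟩

lemma transGen_of_lt (hj : 1 ≤ j) (hjl : j < l) (hlk : l ≤ k) :
    Relation.TransGen E (a j) (a l) ∧ Relation.TransGen E (b j) (b l) := by
  induction l, hjl using Nat.le_induction with
  | base => exact htop.transGen_succ hj hlk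
  | succ l hjl ih =>
    have step := htop.transGen_succ (j := l) (by omega) hlk
    exact ⟨(ih (by omega)).1.trans step.1, (ih (by omega)).2.trans step.2⟩

lemma reflTransGen_of_le (hj : 1 ≤ j) (hjl : j ≤ l) (hlk : l ≤ k) :
    Relation.ReflTransGen E (a j) (a l) ∧ Relation.ReflTransGen E (b j) (b l) := by
  rcases hjl.lt_or_eq with hjl | rfl
  · exact (htop.transGen_of_lt hj hjl hlk).imp (·.to_reflTransGen) (·.to_reflTransGen)
  · exact ⟨.refl, .refl⟩

lemma a_ne_b (hj : j ∈ Set.Icc 1 k) (hl : l ∈ Set.Icc 1 k) : a j ≠ b l :=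
  ne_of_apply_ne (indeg E) <| by
    rw [(htop.level hj.1 hj.2).2.1.1, (htop.level hl.1 hl.2).2.2.1]
    decide

lemma injOn_a (hac : Acyclic E) : (Set.Icc 1 k).InjOn a :=
  hac.injOn_of_transGen fun _ hj _ hl hjl => (htop.transGen_of_lt hj.1 hjl hl.2).1

lemma injOn_b (hac : Acyclic E) : (Set.Icc 1 k).InjOn b :=
  hac.injOn_of_transGen fun _ hj _ hl hjl => (htop.transGen_of_lt hj.1 hjl hl.2).2

end ReticsAtTop

def uncross (E : V → V → Prop) (a b : ℕ → V) (i : ℕ) : V → V → Prop :=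
  swapHeads E (a i) (b i) (a (i + 1)) (b (i + 1))

lemma straight_uncross_self : Straight (uncross E a b i) a b i :=
  ⟨Or.inl rfl, Or.inr (Or.inl rfl)⟩

lemma Straight.uncross (htop : ReticsAtTop E k c a b) (hi : 1 ≤ i) (hik : i < k)
    (hj : 1 ≤ j) (hjk : j < k) (hs : Straight E a b j) : Straight (uncross E a b i) a b j :=
  ⟨swapHeads_of_ne hs.1 (.inr (htop.a_ne_b ⟨by omega, hjk⟩ ⟨by omega, hik⟩))
      (.inl (htop.a_ne_b ⟨hj, hjk.le⟩ ⟨hi, hik.le⟩)),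
    swapHeads_of_ne hs.2 (.inl (htop.a_ne_b ⟨hi, hik.le⟩ ⟨hj, hjk.le⟩).symm)
      (.inr (htop.a_ne_b ⟨by omega, hik⟩ ⟨by omega, hjk⟩).symm)⟩

end Ladder

section Uncross

variable {V X : Type} {E : V → V → Prop} {k : ℕ} {c : V} {a b : ℕ → V} {i : ℕ}
  (htop : ReticsAtTop E k c a b) (hi : 1 ≤ i) (hik : i < k) (hcr : Crossed E a b i)
include htop hi hik hcr

lemma ReticsAtTop.degree_uncross :
    indeg (uncross E a b i) = indeg E ∧ outdeg (uncross E a b i) = outdeg E := by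
  have hlev := htop.level hi hik.le
  have hlev' := htop.level (by omega) hik
  have hne := htop.a_ne_b ⟨hi, hik.le⟩ ⟨hi, hik.le⟩
  have hne' := htop.a_ne_b ⟨by omega, hik⟩ ⟨by omega, hik⟩
  have hxx' : ¬E (a i) (a (i + 1)) := fun h => hne (eq_of_indeg_eq_one hlev'.2.1.1 h hcr.2)
  have hyy' : ¬E (b i) (b (i + 1)) := fun h => hne' (eq_of_outdeg_eq_one hlev.2.2.2 hcr.2 h)
  exact ⟨indeg_swapHeads hne hne' hcr.1 hcr.2 hxx' hyy',
    outdeg_swapHeads hne hne' hcr.1 hcr.2 hxx' hyy'⟩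

variable [Fintype V] {lab : X → V} (hN : IsPhyloNet E lab)
include hN

lemma isPhyloNet_uncross : IsPhyloNet (uncross E a b i) lab :=
  hN.of_degree_eq
    (hN.acyclic.of_le_transGen fun _ _ => transGen_of_swapHeads (htop.level hi hik.le).1 hcr.2
      (htop.level (by omega) hik).1)
    (htop.degree_uncross hi hik hcr).1 (htop.degree_uncross hi hik hcr).2

lemma headMoveStep_uncross :
    HeadMoveStep ⟨V, inferInstance, E, lab⟩ ⟨V, inferInstance, uncross E a b i, lab⟩ := by
  have hlev := htop.level hi hik.le
  obtain ⟨u, hu, hua⟩ := exists_ne_of_indeg_eq_two (u := a i) hlev.2.2.1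
  refine ⟨hN, isPhyloNet_uncross htop hi hik hcr hN, u, b i, a i, a (i + 1), a i, b (i + 1),
    hu, hlev.1, hua.symm, hcr.2, hcr.1, ?_⟩
  rw [headMoveEdges_eq_swapHeads hu hlev.1 (htop.a_ne_b ⟨by omega, hik⟩ ⟨hi, hik.le⟩).symm
    ((htop.injOn_b hN.acyclic).ne ⟨hi, hik.le⟩ ⟨by omega, hik⟩ (by omega))]
  exact LabIso.refl _ _

lemma reticsAtTop_uncross : ReticsAtTop (uncross E a b i) k c a b := by
  obtain ⟨hin, hout⟩ := htop.degree_uncross hi hik hcr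
  have ha := htop.injOn_a hN.acyclic
  have hb := htop.injOn_b hN.acyclic
  have mi : i ∈ Set.Icc 1 k := ⟨hi, hik.le⟩
  have mi' : i + 1 ∈ Set.Icc 1 k := ⟨by omega, hik⟩
  have m1 : 1 ∈ Set.Icc 1 k := ⟨le_rfl, by omega⟩
  obtain ⟨ρ, hρ, hρc⟩ := htop.1
  have hρa : ρ ≠ a i :=
    ne_of_apply_ne (indeg E) (by rw [hρ.1, (htop.level hi hik.le).2.1.1]; decide)
  have hρb : ρ ≠ b i :=
    ne_of_apply_ne (indeg E) (by rw [hρ.1, (htop.level hi hik.le).2.2.1]; decide)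
  refine ⟨⟨ρ, by simpa only [IsRoot, hin, hout] using hρ,
      swapHeads_of_ne hρc (.inl hρa) (.inl hρb)⟩,
    swapHeads_of_ne htop.2.1 (.inr (htop.a_ne_b m1 mi')) (.inr (ha.ne m1 mi' (by omega))),
    swapHeads_of_ne htop.2.2.1 (.inr (hb.ne m1 mi' (by omega))) (.inr (htop.a_ne_b mi' m1).symm),
    fun j hj hjk => ?_, fun j hj hjk => ?_⟩
  · obtain ⟨hE, hsplit, hretic⟩ := htop.level hj hjk
    refine ⟨swapHeads_of_ne hE ?_ (.inl (htop.a_ne_b ⟨hj, hjk⟩ mi)),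
      by simpa only [IsSplit, hin, hout] using hsplit,
      by simpa only [IsRetic, hin, hout] using hretic⟩
    rcases eq_or_ne j i with rfl | hji
    · exact .inr (hb.ne mi mi' (by omega))
    · exact .inl (ha.ne ⟨hj, hjk⟩ mi hji)
  · rcases eq_or_ne j i with rfl | hji
    · exact .inl straight_uncross_self
    rcases htop.straight_or_crossed hj hjk with hs | ⟨hab, hba⟩
    · exact .inl (hs.uncross htop hi hik hj hjk)
    · exact .inr ⟨swapHeads_of_ne hab (.inl (ha.ne ⟨hj, hjk.le⟩ mi hji))
          (.inl (htop.a_ne_b ⟨hj, hjk.le⟩ mi)),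
        swapHeads_of_ne hba (.inl (htop.a_ne_b mi ⟨hj, hjk.le⟩).symm)
          (.inl (hb.ne ⟨hj, hjk.le⟩ mi hji))⟩

lemma agreeBelow_uncross :
    AgreeBelow E (uncross E a b i) (a k) ∧ AgreeBelow E (uncross E a b i) (b k) := by
  obtain ⟨ha, hb⟩ := htop.reflTransGen_of_le (j := i + 1) (by omega) hik le_rfl
  have hbb : Relation.TransGen E (b i) (b (i + 1)) :=
    .tail (.single hcr.2) (htop.level (by omega) hik).1
  have hab : Relation.TransGen E (a i) (a (i + 1)) := .tail (.single (htop.level hi hik.le).1) hcr.2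
  exact ⟨agreeBelow_swapHeads (hN.acyclic.not_reflTransGen (hab.trans_left ha))
      (hN.acyclic.not_reflTransGen ((Relation.TransGen.single hcr.2).trans_left ha)),
    agreeBelow_swapHeads
      (hN.acyclic.not_reflTransGen ((Relation.TransGen.single hcr.1).trans_left hb))
      (hN.acyclic.not_reflTransGen (hbb.trans_left hb))⟩

end Uncross

lemma exists_stepsLE_neatlyAtTop {V X : Type} [Fintype V] {lab : X → V} {k : ℕ} {c : V}
    {a b : ℕ → V} (m : ℕ) {E : V → V → Prop} (hN : IsPhyloNet E lab)
    (htop : ReticsAtTop E k c a b) (habove : ∀ j, m < j → j < k → Straight E a b j) :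
    ∃ E' : V → V → Prop,
      stepsLE HeadMoveStep m ⟨V, inferInstance, E, lab⟩ ⟨V, inferInstance, E', lab⟩ ∧
      IsPhyloNet E' lab ∧ NeatlyAtTop E' k c a b ∧
      AgreeBelow E E' (a k) ∧ AgreeBelow E E' (b k) := by
  induction m generalizing E with
  | zero =>
    exact ⟨E, LabIso.refl _ _, hN, ⟨htop.1, htop.2.1, htop.2.2.1, htop.2.2.2.1, habove⟩,
      fun _ _ _ => Iff.rfl, fun _ _ _ => Iff.rfl⟩
  | succ m ih =>
    by_cases hmove : m + 1 < k ∧ Crossed E a b (m + 1)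
    · obtain ⟨hmk, hcr⟩ := hmove
      have hi : 1 ≤ m + 1 := by omega
      obtain ⟨E', hsteps, hN', hneat, hA, hB⟩ := ih (isPhyloNet_uncross htop hi hmk hcr hN)
        (reticsAtTop_uncross htop hi hmk hcr hN) fun j hmj hjk => by
          rcases eq_or_ne j (m + 1) with rfl | hj
          · exact straight_uncross_self
          · exact (habove j (by omega) hjk).uncross htop hi hmk (by omega) hjk
      obtain ⟨hA₁, hB₁⟩ := agreeBelow_uncross htop hi hmk hcr hN
      exact ⟨E', .inr ⟨_, headMoveStep_uncross htop hi hmk hcr hN, hsteps⟩, hN', hneat,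
        hA₁.trans hA, hB₁.trans hB⟩
    · obtain ⟨E', hsteps, rest⟩ := ih hN htop fun j hmj hjk => by
        rcases eq_or_ne j (m + 1) with rfl | hj
        · exact (htop.straight_or_crossed (by omega) hjk).resolve_right fun h => hmove ⟨hjk, h⟩
        · exact habove j (by omega) hjk
      exact ⟨E', .inl hsteps, rest⟩

theorem redirect_top_retics_general {X : Type} (N : Net X) (k : ℕ)
    (c : N.V) (a b : ℕ → N.V) (hN : N.valid) (htop : ReticsAtTop N.E k c a b) :
    ∃ (N' : Net X) (c' : N'.V) (a' b' : ℕ → N'.V),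
      stepsLE HeadMoveStep k N N' ∧ N'.valid ∧ NeatlyAtTop N'.E k c' a' b' ∧
      ∃ ψ : {w : N.V // Relation.ReflTransGen N.E (a k) w ∨ Relation.ReflTransGen N.E (b k) w}
          ≃ {w : N'.V // Relation.ReflTransGen N'.E (a' k) w ∨ Relation.ReflTransGen N'.E (b' k) w},
        (∀ w z : {w : N.V // Relation.ReflTransGen N.E (a k) w ∨ Relation.ReflTransGen N.E (b k) w},
          N.E w.1 z.1 ↔ N'.E (ψ w).1 (ψ z).1) ∧
        ∀ (x : X) (hx : Relation.ReflTransGen N.E (a k) (N.lab x) ∨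
            Relation.ReflTransGen N.E (b k) (N.lab x)),
          (ψ ⟨N.lab x, hx⟩).1 = N'.lab x := by
  obtain ⟨E', hsteps, hN', hneat, hA, hB⟩ :=
    exists_stepsLE_neatlyAtTop k hN htop fun _ hkj hjk => absurd hjk hkj.not_gt
  refine ⟨⟨N.V, N.fin, E', N.lab⟩, c, a, b, hsteps, hN', hneat,
    Equiv.subtypeEquivRight fun _ => or_congr hA.reflTransGen_iff hB.reflTransGen_iff, ?_,
    fun _ _ => rfl⟩
  rintro ⟨w, hw | hw⟩ z
  · exact hA w hw z
  · exact hB w hw z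

/-- a network with `k` reticulations at the top can be transformed by
at most `k` head moves into a network with the `k` reticulations neatly at the top,
without altering the subnetwork below `a k` and `b k`. -/
theorem redirect_top_retics {X : Type} (N : Net X) (k : ℕ) (hk : 1 ≤ k)
    (c : N.V) (a b : ℕ → N.V) (hN : N.valid) (htop : ReticsAtTop N.E k c a b) :
    ∃ (N' : Net X) (c' : N'.V) (a' b' : ℕ → N'.V),
      stepsLE HeadMoveStep k N N' ∧ N'.valid ∧ NeatlyAtTop N'.E k c' a' b' ∧
      ∃ ψ : {w : N.V // Relation.ReflTransGen N.E (a k) w ∨ Relation.ReflTransGen N.E (b k) w}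
          ≃ {w : N'.V // Relation.ReflTransGen N'.E (a' k) w ∨ Relation.ReflTransGen N'.E (b' k) w},
        (∀ w z : {w : N.V // Relation.ReflTransGen N.E (a k) w ∨ Relation.ReflTransGen N.E (b k) w},
          N.E w.1 z.1 ↔ N'.E (ψ w).1 (ψ z).1) ∧
        ∀ (x : X) (hx : Relation.ReflTransGen N.E (a k) (N.lab x) ∨
            Relation.ReflTransGen N.E (b k) (N.lab x)),
          (ψ ⟨N.lab x, hx⟩).1 = N'.lab x :=
  redirect_top_retics_general N k c a b hN htop

end Phylo
end
end
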